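/- Let K be a loop-free unital free augmented directed complex, let x = (x_0^−, x_0^+ | x_1^−, x_1^+ | …) be a member of νK, let q ≥ 0 and let α be a sign. Then each of the four chains x_q^−, x_q^+, g_q^−(x) and g_q^+(x) is a sum of distinct basis elements, i.e. all of its coordinates with respect to the distinguished basis lie in {0, 1}. -/

import Mathlib

open Finsupp

/-- A free augmented directed complex, encoded by its distinguished graded basis:
`B` is the set of basis elements, `dim` the dimension function, `bd a` the boundary
chain of a basis element `a`, and `eps` the augmentation (supported in dimension 0). -/
structure FADC where
  B : Type
  dim : B → ℕ
  bd : B → (B →₀ ℤ)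
  eps : B → ℤ
  bd_dim : ∀ a b, b ∈ (bd a).support → dim b + 1 = dim a
  eps_dim : ∀ b, 0 < dim b → eps b = 0
  bd_bd : ∀ a : B, ((bd a).sum fun b n => n • bd b) = 0
  eps_bd : ∀ a : B, ((bd a).sum fun b n => n * eps b) = 0

namespace FADC

variable (K : FADC)

/-- The boundary homomorphism `∂`, extended to chains. -/
noncomputable def bdc (c : K.B →₀ ℤ) : K.B →₀ ℤ := c.sum fun b n => n • K.bd b

/-- The augmentation `ε`, extended to chains. -/
noncomputable def epsc (c : K.B →₀ ℤ) : ℤ := c.sum fun b n => n * K.eps b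

/-- `∂⁺c`, the positive part of `∂c`. -/
noncomputable def bdp (c : K.B →₀ ℤ) : K.B →₀ ℤ := (K.bdc c).mapRange (fun n => max n 0) (by simp)

/-- `∂⁻c`, the negative part of `∂c`. -/
noncomputable def bdm (c : K.B →₀ ℤ) : K.B →₀ ℤ := (-K.bdc c).mapRange (fun n => max n 0) (by simp)

/-- `K` is unital if `ε((∂⁻)^q a) = ε((∂⁺)^q a) = 1` for every `q`-dimensional
basis element `a`. -/
def Unital : Prop := ∀ a : K.B,
  K.epsc (K.bdm^[K.dim a] (Finsupp.single a 1)) = 1 ∧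
  K.epsc (K.bdp^[K.dim a] (Finsupp.single a 1)) = 1

/-- `K` is loop-free if its basis elements admit a (strict) partial order such that
for every basis element `a` and every `r > 0`, the basis elements occurring in
`(∂⁻)^r a` strictly precede those occurring in `(∂⁺)^r a`. -/
def LoopFree : Prop :=
  ∃ lt : K.B → K.B → Prop, IsStrictOrder K.B lt ∧
    ∀ (a : K.B) (r : ℕ), 0 < r →
      ∀ b ∈ (K.bdm^[r] (Finsupp.single a 1)).support,
        ∀ b' ∈ (K.bdp^[r] (Finsupp.single a 1)).support, lt b b'

/-- `K` is atomic of dimension `n`. -/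
def Atomic (n : ℕ) : Prop :=
  (∀ b : K.B, K.dim b ≤ n) ∧
  (∃! g : K.B, K.dim g = n) ∧
  (∀ b : K.B, K.dim b < n → ∃ a : K.B, K.dim b < K.dim a ∧
    (b ∈ (K.bdm (Finsupp.single a 1)).support ∨ b ∈ (K.bdp (Finsupp.single a 1)).support))

/-- `g_q^α(x)`: given `x_q^- = xq` and `x_{q+1}^α = c`, this is
`x_q^- + ∂⁺a_1 + … + ∂⁺a_k` where `a_1, …, a_k` are the terms of `c`. -/
noncomputable def gch (xq c : K.B →₀ ℤ) : K.B →₀ ℤ :=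
  xq + c.sum fun b n => n • K.bdp (Finsupp.single b 1)

/-- The negative chains `⟨K⟩_q^- = (∂⁻)^{n-q} g` of the canonical atom. -/
noncomputable def atomNeg (g : K.B) (n q : ℕ) : K.B →₀ ℤ :=
  if q ≤ n then K.bdm^[n - q] (Finsupp.single g 1) else 0

/-- The positive chains `⟨K⟩_q^+ = (∂⁺)^{n-q} g` of the canonical atom. -/
noncomputable def atomPos (g : K.B) (n q : ℕ) : K.B →₀ ℤ :=
  if q ≤ n then K.bdp^[n - q] (Finsupp.single g 1) else 0

end FADC

/-- Membership in `νK`: the double sequence `(x_0^-, x_0^+ | x_1^-, x_1^+ | …)`,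
given by `xm` and `xp`, is a member of `νK`. -/
structure NuMem (K : FADC) (xm xp : ℕ → (K.B →₀ ℤ)) : Prop where
  dim_m : ∀ q, ∀ b ∈ (xm q).support, K.dim b = q
  dim_p : ∀ q, ∀ b ∈ (xp q).support, K.dim b = q
  nonneg_m : ∀ q b, 0 ≤ xm q b
  nonneg_p : ∀ q b, 0 ≤ xp q b
  fin : ∃ n, ∀ q, n < q → xm q = 0 ∧ xp q = 0
  eps_m : K.epsc (xm 0) = 1
  eps_p : K.epsc (xp 0) = 1
  bd_m : ∀ q, K.bdc (xm (q + 1)) = xp q - xm q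
  bd_p : ∀ q, K.bdc (xp (q + 1)) = xp q - xm q

/-- `K` together with the class `thin` of thin basis elements is an
`n`-dimensional opetopic directed complex. -/
structure IsODC (K : FADC) (thin : K.B → Prop) (n : ℕ) : Prop where
  atomic : K.Atomic n
  loopFree : K.LoopFree
  unital : K.Unital
  thin_pos : ∀ b, thin b → 0 < K.dim b
  bdp_basis : ∀ b : K.B, 0 < K.dim b →
    ∃ a : K.B, ¬ thin a ∧ K.bdp (Finsupp.single b 1) = Finsupp.single a 1
  bdm_thin : ∀ b : K.B, thin b →
    ∃ a : K.B, ¬ thin a ∧ K.bdm (Finsupp.single b 1) = Finsupp.single a 1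

/-- An opetopic directed complex is reduced if every thin basis element is `∂⁻a`
for some other basis element `a`. -/
def ODCReduced (K : FADC) (thin : K.B → Prop) : Prop :=
  ∀ b, thin b → ∃ a, a ≠ b ∧ K.bdm (Finsupp.single a 1) = Finsupp.single b 1

/-- A network: finite sets of edges and vertices with partially defined source and
target functions; input edges are those with no source, output edges those with no
target. -/
structure Network where
  E : Type
  V : Type
  finE : Finite E
  finV : Finite V
  src : E → Option V
  tgt : E → Option V

namespace Network

variable (N : Network)

/-- One step of a path: the target of `e` is the source of `e'`. -/
def step (e e' : N.E) : Prop := ∃ v : N.V, N.tgt e = some v ∧ N.src e' = some v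

/-- There is a path from `e` to `e'`. -/
def PathTo (e e' : N.E) : Prop := Relation.ReflTransGen N.step e e'

/-- A network is acyclic if there is no nontrivial path from an edge to itself. -/
def Acyclic : Prop := ∀ e : N.E, ¬ Relation.TransGen N.step e e

/-- A network is linear if it is acyclic and consists of a single path
`e_0, v_1, e_1, …, v_k, e_k`. -/
def Linear : Prop := N.Acyclic ∧
  ∃ (k : ℕ) (e : Fin (k + 1) ≃ N.E) (v : Fin k ≃ N.V),
    N.src (e 0) = none ∧ N.tgt (e (Fin.last k)) = none ∧
    ∀ i : Fin k, N.tgt (e i.castSucc) = some (v i) ∧ N.src (e i.succ) = some (v i)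

/-- A network is confluent if it is acyclic, has a unique output edge, and every
vertex is the source of exactly one edge and the target of at least one edge. -/
def Confluent : Prop := N.Acyclic ∧ (∃! e : N.E, N.tgt e = none) ∧
  (∀ v : N.V, ∃! e : N.E, N.src e = some v) ∧ (∀ v : N.V, ∃ e : N.E, N.tgt e = some v)

end Network

/-- An opetopic network: an acyclic network with a unique output edge, together with
thin edges (which are inputs) and thin vertices (each the target of exactly one edge,
which is not thin). -/
structure OpetopicNetwork extends Network where
  thinE : E → Prop
  thinV : V → Prop
  acyclic : toNetwork.Acyclic
  out_unique : ∃! e : E, tgt e = none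
  thinE_input : ∀ e, thinE e → src e = none
  thinV_unique : ∀ v, thinV v → ∃! e, tgt e = some v
  thinV_nonthin : ∀ v e, thinV v → tgt e = some v → ¬ thinE e

/-- An opetopic network is reduced if every thin edge has a target vertex which is
the target of no other edge. -/
def OpetopicNetwork.Reduced (N : OpetopicNetwork) : Prop :=
  ∀ e, N.thinE e → ∃ v, N.tgt e = some v ∧ ∀ e', N.tgt e' = some v → e' = e

/-- `c` is a constellation from `N` to `P`: a bijection from the vertices of `N` to
the input edges of `P`, preserving thinness, such that for every edge `e` of `P`
there is exactly one edge of `N` with a source but not a target in the preimage of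
`I_e` (the input edges of `P` from which there is a path to `e`). -/
def IsConstellation (N P : OpetopicNetwork) (c : N.V → P.E) : Prop :=
  (∀ v, P.src (c v) = none) ∧
  Function.Injective c ∧
  (∀ e : P.E, P.src e = none → ∃ v, c v = e) ∧
  (∀ v, N.thinV v ↔ P.thinE (c v)) ∧
  (∀ e : P.E, ∃! e' : N.E,
    (∃ v, N.src e' = some v ∧ P.toNetwork.PathTo (c v) e) ∧
    ¬ (∃ v, N.tgt e' = some v ∧ P.toNetwork.PathTo (c v) e))

/-- An `n`-dimensional opetopic sequence `N_0 → N_1 → … → N_n`. -/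
structure OpetopicSequence (n : ℕ) where
  N : Fin (n + 1) → OpetopicNetwork
  c : ∀ q : Fin n, (N q.castSucc).V → (N q.succ).E
  constell : ∀ q : Fin n, IsConstellation (N q.castSucc) (N q.succ) (c q)
  linear0 : (N 0).toNetwork.Linear
  noThin0 : ∀ e, ¬ (N 0).thinE e
  top_single : ∃! _e : (N (Fin.last n)).E, True
  top_noV : IsEmpty (N (Fin.last n)).V

/-- An isomorphism of opetopic sequences: families of bijections on edges and
vertices preserving sources, targets, thin edges and thin vertices, and commuting
with the constellations. -/
def SeqIso (n : ℕ) (S S' : OpetopicSequence n) : Prop :=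
  ∃ (fE : ∀ q : Fin (n + 1), (S.N q).E ≃ (S'.N q).E)
    (fV : ∀ q : Fin (n + 1), (S.N q).V ≃ (S'.N q).V),
    (∀ q : Fin (n + 1),
      (∀ e v, (S.N q).src e = some v ↔ (S'.N q).src (fE q e) = some (fV q v)) ∧
      (∀ e v, (S.N q).tgt e = some v ↔ (S'.N q).tgt (fE q e) = some (fV q v)) ∧
      (∀ e, (S.N q).thinE e ↔ (S'.N q).thinE (fE q e)) ∧
      (∀ v, (S.N q).thinV v ↔ (S'.N q).thinV (fV q v))) ∧
    (∀ q : Fin n, ∀ v, fE q.succ (S.c q v) = S'.c q (fV q.castSucc v))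

/-- The opetopic sequence `S` realizes the sequence
`G_0^-(⟨K⟩) → … → G_n^-(⟨K⟩)` associated to the opetopic directed complex `K`
(with top basis element `g` and thin elements `thin`): the edges of `S.N q`
correspond bijectively to the terms of `g_q^-(⟨K⟩)`, the vertices to the terms of
`⟨K⟩_{q+1}^-`, sources, targets and thinness are as prescribed by `∂⁺`, `∂⁻` and
`thin`, and the constellations are the identity correspondences. -/
def RealizedBy (K : FADC) (thin : K.B → Prop) (n : ℕ) (g : K.B)
    (S : OpetopicSequence n) : Prop :=
  ∃ (eE : ∀ q : Fin (n + 1), (S.N q).E → K.B)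
    (eV : ∀ q : Fin (n + 1), (S.N q).V → K.B),
    (∀ q : Fin (n + 1),
      Function.Injective (eE q) ∧
      (∀ ed, eE q ed ∈ (K.gch (K.atomNeg g n q.1) (K.atomNeg g n (q.1 + 1))).support) ∧
      (∀ b ∈ (K.gch (K.atomNeg g n q.1) (K.atomNeg g n (q.1 + 1))).support,
        ∃ ed, eE q ed = b) ∧
      Function.Injective (eV q) ∧
      (∀ v, eV q v ∈ (K.atomNeg g n (q.1 + 1)).support) ∧
      (∀ b ∈ (K.atomNeg g n (q.1 + 1)).support, ∃ v, eV q v = b) ∧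
      (∀ ed v, (S.N q).src ed = some v ↔
        eE q ed ∈ (K.bdp (Finsupp.single (eV q v) 1)).support) ∧
      (∀ ed v, (S.N q).tgt ed = some v ↔
        eE q ed ∈ (K.bdm (Finsupp.single (eV q v) 1)).support) ∧
      (∀ ed, (S.N q).thinE ed ↔ thin (eE q ed)) ∧
      (∀ v, (S.N q).thinV v ↔ thin (eV q v))) ∧
    (∀ q : Fin n, ∀ v, eE q.succ (S.c q v) = eV q.castSucc v)

/-- A bundled `n`-dimensional opetopic directed complex. -/
structure ODCBundle (n : ℕ) where
  K : FADC
  thin : K.B → Prop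
  g : K.B
  dim_g : K.dim g = n
  isODC : IsODC K thin n

/-- Isomorphism of (bundled) opetopic directed complexes: a dimension- and
thinness-preserving bijection of bases commuting with boundaries and augmentations. -/
def ODCIso {n : ℕ} (A A' : ODCBundle n) : Prop :=
  ∃ φ : A.K.B ≃ A'.K.B,
    (∀ b, A'.K.dim (φ b) = A.K.dim b) ∧
    (∀ b, A'.thin (φ b) ↔ A.thin b) ∧
    (∀ b, A'.K.bd (φ b) = Finsupp.equivMapDomain φ (A.K.bd b)) ∧
    (∀ b, A'.K.eps (φ b) = A.K.eps b)
/-!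
Induction on `q`, simultaneously for all `x ∈ νK`, shows that `x_q^-` has coefficients at most
`1`. In dimension `0` this is unitality: `0`-dimensional basis elements have augmentation `1`
and `ε x_0^- = 1`. In the inductive step, a coefficient `≥ 2` of `a` in `x_{q+1}^-` would give a
coefficient `≥ 2` of `g_q^-(x)` at any `b` in `∂⁻a`.

The key point is that, for a fixed basis element `b`, the chain `g_q^α(x)` agrees at `b` with a
chain `x_q^- + ∂w` that can serve as the `q`-th term of another member of `νK`. Here `w` is the
part of `x_{q+1}^α` lying upstream (for the relation "`∂⁺a` meets `∂⁻a'`") of the terms `a`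
with `b` in `∂⁺a`. Loop-freeness shows that `b` lies in `∂⁻` of nothing upstream. Being closed
upstream makes `x_q^- + ∂w` nonnegative. The bounds on `x_q^+` and on `g_q^α(x)` follow from
`x_q^- ≤ g_q^α(x)` and `x_q^+ ≤ g_q^+(x)`.
-/

namespace FADC

variable {K : FADC}

theorem bdc_apply (c : K.B →₀ ℤ) (b : K.B) : K.bdc c b = ∑ a ∈ c.support, c a * K.bd a b := by
  simp only [bdc, Finsupp.sum, Finsupp.finsetSum_apply, Finsupp.smul_apply, smul_eq_mul]

theorem epsc_apply (c : K.B →₀ ℤ) : K.epsc c = ∑ a ∈ c.support, c a * K.eps a := rfl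

theorem bdc_add (c d : K.B →₀ ℤ) : K.bdc (c + d) = K.bdc c + K.bdc d :=
  map_add (linearCombination ℤ K.bd) c d

theorem bdc_zero : K.bdc 0 = 0 := map_zero (linearCombination ℤ K.bd)

theorem epsc_add (c d : K.B →₀ ℤ) : K.epsc (c + d) = K.epsc c + K.epsc d :=
  map_add (linearCombination ℤ K.eps) c d

theorem bdc_single (a : K.B) (n : ℤ) : K.bdc (single a n) = n • K.bd a :=
  linearCombination_single ℤ n a

theorem bdc_bdc (c : K.B →₀ ℤ) : K.bdc (K.bdc c) = 0 := by
  have h : (linearCombination ℤ K.bd).comp (linearCombination ℤ K.bd) = 0 :=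
    lhom_ext fun a n => by
      simp only [LinearMap.comp_apply, linearCombination_single, map_zsmul, LinearMap.zero_apply]
      rw [show linearCombination ℤ K.bd (K.bd a) = 0 from K.bd_bd a, smul_zero]
  exact LinearMap.congr_fun h c

theorem epsc_bdc (c : K.B →₀ ℤ) : K.epsc (K.bdc c) = 0 := by
  have h : (linearCombination ℤ K.eps).comp (linearCombination ℤ K.bd) = 0 :=
    lhom_ext fun a n => by
      simp only [LinearMap.comp_apply, linearCombination_single, map_zsmul, LinearMap.zero_apply]
      rw [show linearCombination ℤ K.eps (K.bd a) = 0 from K.eps_bd a, smul_zero]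
  exact LinearMap.congr_fun h c

theorem dim_of_mem_support_bdc {w : K.B →₀ ℤ} {q : ℕ} (hw : ∀ a ∈ w.support, K.dim a = q + 1)
    {b : K.B} (hb : b ∈ (K.bdc w).support) : K.dim b = q := by
  rw [mem_support_iff, bdc_apply] at hb
  obtain ⟨a, ha, hab⟩ := Finset.exists_ne_zero_of_sum_ne_zero hb
  have := K.bd_dim a b (mem_support_iff.2 (right_ne_zero_of_mul hab))
  have := hw a ha
  omega

theorem bdp_single_apply (a b : K.B) : K.bdp (single a 1) b = max (K.bd a b) 0 := by
  rw [bdp, mapRange_apply, bdc_single, one_smul]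

theorem bdm_single_apply (a b : K.B) : K.bdm (single a 1) b = max (-K.bd a b) 0 := by
  rw [bdm, mapRange_apply, bdc_single, one_smul, Finsupp.neg_apply]

theorem gch_apply (u z : K.B →₀ ℤ) (b : K.B) :
    K.gch u z b = u b + ∑ a ∈ z.support, z a * K.bdp (single a 1) b := by
  simp only [gch, Finsupp.add_apply, Finsupp.sum, Finsupp.finsetSum_apply, Finsupp.smul_apply,
    smul_eq_mul]

theorem gch_apply_of_bdc_eq {u v z : K.B →₀ ℤ} (hbd : K.bdc z = v - u) (b : K.B) :
    K.gch u z b = v b + ∑ a ∈ z.support, z a * K.bdm (single a 1) b := by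
  have hb : ∑ a ∈ z.support, z a * K.bd a b = v b - u b := by
    rw [← bdc_apply, hbd, Finsupp.sub_apply]
  have hsplit : ∑ a ∈ z.support, z a * K.bd a b = ∑ a ∈ z.support, z a * K.bdp (single a 1) b
      - ∑ a ∈ z.support, z a * K.bdm (single a 1) b := by
    rw [← Finset.sum_sub_distrib]
    refine Finset.sum_congr rfl fun a _ => ?_
    rw [bdp_single_apply, bdm_single_apply, ← mul_sub, max_zero_sub_max_neg_zero_eq_self]
  rw [gch_apply]
  omega

theorem apply_le_gch {z : K.B →₀ ℤ} (hz : ∀ a, 0 ≤ z a) (u : K.B →₀ ℤ) (b : K.B) :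
    u b ≤ K.gch u z b := by
  rw [gch_apply, le_add_iff_nonneg_right]
  exact Finset.sum_nonneg fun a _ =>
    mul_nonneg (hz a) (by rw [bdp_single_apply]; exact le_max_right _ _)

theorem apply_le_gch_of_bdc_eq {u v z : K.B →₀ ℤ} (hz : ∀ a, 0 ≤ z a) (hbd : K.bdc z = v - u)
    (b : K.B) : v b ≤ K.gch u z b := by
  rw [gch_apply_of_bdc_eq hbd, le_add_iff_nonneg_right]
  exact Finset.sum_nonneg fun a _ =>
    mul_nonneg (hz a) (by rw [bdm_single_apply]; exact le_max_right _ _)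

theorem add_mul_bdm_single_le_gch {u v z : K.B →₀ ℤ} (hz : ∀ a, 0 ≤ z a) (hbd : K.bdc z = v - u)
    {a : K.B} (ha : a ∈ z.support) (b : K.B) :
    v b + z a * K.bdm (single a 1) b ≤ K.gch u z b := by
  rw [gch_apply_of_bdc_eq hbd, add_le_add_iff_left]
  refine Finset.single_le_sum (f := fun a => z a * K.bdm (single a 1) b) (fun a _ => ?_) ha
  exact mul_nonneg (hz a) (by rw [bdm_single_apply]; exact le_max_right _ _)

theorem Unital.eps_eq_one (hU : K.Unital) {a : K.B} (ha : K.dim a = 0) : K.eps a = 1 := by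
  simpa [ha, epsc] using (hU a).1

theorem Unital.exists_bd_neg (hU : K.Unital) {a : K.B} (ha : 0 < K.dim a) :
    ∃ b, K.bd a b < 0 := by
  by_contra! hnonneg
  have hbdm : K.bdm (single a 1) = 0 := Finsupp.ext fun b => by
    rw [bdm_single_apply, Finsupp.zero_apply, max_eq_right (neg_nonpos.2 (hnonneg b))]
  have hbdm_zero : K.bdm 0 = 0 := by simp [bdm, bdc_zero]
  obtain ⟨n, hn⟩ := Nat.exists_eq_succ_of_ne_zero ha.ne'
  have h := (hU a).1
  rw [hn, Function.iterate_succ_apply, hbdm, Function.iterate_fixed hbdm_zero, epsc,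
    Finsupp.sum_zero_index] at h
  exact zero_ne_one h

theorem lt_of_bd_neg_of_bd_pos {lt : K.B → K.B → Prop}
    (hlt : ∀ (a : K.B) (r : ℕ), 0 < r → ∀ b ∈ (K.bdm^[r] (single a 1)).support,
      ∀ b' ∈ (K.bdp^[r] (single a 1)).support, lt b b')
    {a b b' : K.B} (hb : K.bd a b < 0) (hb' : 0 < K.bd a b') : lt b b' :=
  hlt a 1 one_pos b (by simp [bdm_single_apply, hb]) b' (by simp [bdp_single_apply, hb'])

variable (K) in
/-- Some basis element occurs in both `∂⁺a` and `∂⁻a'`. -/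
def Feeds (a a' : K.B) : Prop := ∃ b, 0 < K.bd a b ∧ K.bd a' b < 0

theorem LoopFree.bd_nonneg_of_reflTransGen_feeds (hLF : K.LoopFree) {a p b : K.B}
    (hap : Relation.ReflTransGen K.Feeds a p) (hb : 0 < K.bd p b) : 0 ≤ K.bd a b := by
  obtain ⟨lt, hso, hlt⟩ := hLF
  have key : ∀ c, K.bd a c < 0 → lt c b := by
    induction hap using Relation.ReflTransGen.head_induction_on with
    | refl => exact fun c hc => lt_of_bd_neg_of_bd_pos hlt hc hb
    | head hfeeds _ ih =>
      obtain ⟨e, hae, he⟩ := hfeeds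
      exact fun c hc => hso.toIsTrans.trans _ _ _ (lt_of_bd_neg_of_bd_pos hlt hc hae) (ih e he)
  by_contra! hneg
  exact hso.toIrrefl.irrefl b (key b hneg)

theorem bdc_filter_apply (z : K.B →₀ ℤ) (P : K.B → Prop) [DecidablePred P] (b : K.B) :
    K.bdc (z.filter P) b = ∑ a ∈ z.support with P a, z a * K.bd a b := by
  rw [bdc_apply, support_filter]
  exact Finset.sum_congr rfl fun a ha => by rw [filter_apply_pos _ _ (Finset.mem_filter.1 ha).2]

theorem add_bdc_filter_nonneg {u v z : K.B →₀ ℤ} (hu : ∀ b, 0 ≤ u b) (hv : ∀ b, 0 ≤ v b)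
    (hz : ∀ a, 0 ≤ z a) (hbd : K.bdc z = v - u) (P : K.B → Prop) [DecidablePred P]
    (hP : ∀ a a', K.Feeds a a' → P a' → P a) (b : K.B) : 0 ≤ u b + K.bdc (z.filter P) b := by
  rw [bdc_filter_apply]
  by_cases hcons : ∃ a' ∈ z.support, P a' ∧ K.bd a' b < 0
  · obtain ⟨a', -, hPa', ha'⟩ := hcons
    have hrest : ∑ a ∈ z.support with ¬ P a, z a * K.bd a b ≤ 0 := by
      refine Finset.sum_nonpos fun a ha => mul_nonpos_of_nonneg_of_nonpos (hz a) ?_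
      by_contra! hpos
      exact (Finset.mem_filter.1 ha).2 (hP a a' ⟨b, hpos, ha'⟩ hPa')
    have htotal : ∑ a ∈ z.support, z a * K.bd a b = v b - u b := by
      rw [← bdc_apply, hbd, Finsupp.sub_apply]
    rw [← Finset.sum_filter_add_sum_filter_not z.support P] at htotal
    linarith [hv b]
  · push Not at hcons
    have : 0 ≤ ∑ a ∈ z.support with P a, z a * K.bd a b :=
      Finset.sum_nonneg fun a ha =>
        mul_nonneg (hz a) (hcons a (Finset.mem_filter.1 ha).1 (Finset.mem_filter.1 ha).2)
    linarith [hu b]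

theorem add_bdc_filter_apply_eq_gch (u z : K.B →₀ ℤ) (P : K.B → Prop) [DecidablePred P]
    {b : K.B} (hprod : ∀ a, 0 < K.bd a b → P a) (hcons : ∀ a, P a → 0 ≤ K.bd a b) :
    u b + K.bdc (z.filter P) b = K.gch u z b := by
  rw [gch_apply, bdc_filter_apply]
  congr 1
  calc ∑ a ∈ z.support with P a, z a * K.bd a b
      = ∑ a ∈ z.support with P a, z a * K.bdp (single a 1) b :=
        Finset.sum_congr rfl fun a ha => by
          rw [bdp_single_apply, max_eq_left (hcons a (Finset.mem_filter.1 ha).2)]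
    _ = ∑ a ∈ z.support, z a * K.bdp (single a 1) b := by
        refine Finset.sum_filter_of_ne fun a _ hne => hprod a ?_
        by_contra! hle
        rw [bdp_single_apply, max_eq_right hle, mul_zero] at hne
        exact hne rfl

theorem LoopFree.exists_subchain_apply_eq_gch (hLF : K.LoopFree) {u v z : K.B →₀ ℤ}
    (hu : ∀ b, 0 ≤ u b) (hv : ∀ b, 0 ≤ v b) (hz : ∀ a, 0 ≤ z a) (hbd : K.bdc z = v - u)
    (b : K.B) : ∃ w : K.B →₀ ℤ, w.support ⊆ z.support ∧ (∀ c, 0 ≤ u c + K.bdc w c) ∧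
      u b + K.bdc w b = K.gch u z b := by
  classical
  let upstream : K.B → Prop := fun a => ∃ p, Relation.ReflTransGen K.Feeds a p ∧ 0 < K.bd p b
  refine ⟨z.filter upstream, by simp [support_filter],
    add_bdc_filter_nonneg hu hv hz hbd upstream ?_,
    add_bdc_filter_apply_eq_gch u z upstream (fun a ha => ⟨a, .refl, ha⟩) ?_⟩
  · rintro a a' hfeeds ⟨p, hp, hpb⟩
    exact ⟨p, .head hfeeds hp, hpb⟩
  · rintro a ⟨p, hp, hpb⟩
    exact hLF.bd_nonneg_of_reflTransGen_feeds hp hpb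

end FADC

namespace NuMem

open FADC

variable {K : FADC}

theorem exists_apply_eq_add_bdc {xm xp : ℕ → (K.B →₀ ℤ)} (hx : NuMem K xm xp) {q : ℕ}
    {w : K.B →₀ ℤ} (hw : ∀ a ∈ w.support, K.dim a = q + 1) (hc : ∀ b, 0 ≤ xm q b + K.bdc w b) :
    ∃ ym yp, NuMem K ym yp ∧ ym q = xm q + K.bdc w := by
  classical
  set c := xm q + K.bdc w
  have hc_dim : ∀ b ∈ c.support, K.dim b = q := fun b hb => by
    rcases Finset.mem_union.1 (support_add hb) with hb | hb
    exacts [hx.dim_m q b hb, dim_of_mem_support_bdc hw hb]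
  have hc_bdc : K.bdc c = K.bdc (xm q) := by rw [bdc_add, bdc_bdc, add_zero]
  have hc_epsc : K.epsc c = K.epsc (xm q) := by rw [epsc_add, epsc_bdc, add_zero]
  let trunc (x : ℕ → K.B →₀ ℤ) (r : ℕ) : K.B →₀ ℤ :=
    if r < q then x r else if r = q then c else 0
  have trunc_dim (x : ℕ → K.B →₀ ℤ) (hx_dim : ∀ r, ∀ b ∈ (x r).support, K.dim b = r) :
      ∀ r, ∀ b ∈ (trunc x r).support, K.dim b = r := fun r b hb => by
    simp only [trunc] at hb
    split_ifs at hb with h₁ h₂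
    exacts [hx_dim r b hb, h₂ ▸ hc_dim b hb, absurd hb (by simp)]
  have trunc_nonneg (x : ℕ → K.B →₀ ℤ) (hx_nonneg : ∀ r b, 0 ≤ x r b) :
      ∀ r b, 0 ≤ trunc x r b := fun r b => by
    simp only [trunc]
    split_ifs
    exacts [hx_nonneg r b, hc b, le_rfl]
  have trunc_bdc (x : ℕ → K.B →₀ ℤ) (hx_bdc : ∀ r, K.bdc (x (r + 1)) = xp r - xm r) :
      ∀ r, K.bdc (trunc x (r + 1)) = trunc xp r - trunc xm r := fun r => by
    simp only [trunc]
    split_ifs <;> first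
      | omega
      | exact hx_bdc r
      | (subst q; rw [hc_bdc, hx.bd_m r])
      | rw [sub_self, bdc_zero]
  have trunc_zero (x : ℕ → K.B →₀ ℤ) (hx_eps : K.epsc (x 0) = 1) : K.epsc (trunc x 0) = 1 := by
    rcases Nat.eq_zero_or_pos q with rfl | hq
    · simpa [trunc, hc_epsc] using hx.eps_m
    · simpa [trunc, hq] using hx_eps
  refine ⟨trunc xm, trunc xp, ⟨trunc_dim xm hx.dim_m, trunc_dim xp hx.dim_p,
    trunc_nonneg xm hx.nonneg_m, trunc_nonneg xp hx.nonneg_p,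
    ⟨q, fun r hr => by simp [trunc, hr.not_gt, hr.ne']⟩, trunc_zero xm hx.eps_m,
    trunc_zero xp hx.eps_p, trunc_bdc xm hx.bd_m, trunc_bdc xp hx.bd_p⟩, by simp [trunc]⟩

theorem gch_le_one (hLF : K.LoopFree) {xm xp : ℕ → (K.B →₀ ℤ)} (hx : NuMem K xm xp) {q : ℕ}
    {z : K.B →₀ ℤ} (hz : ∀ a, 0 ≤ z a) (hz_dim : ∀ a ∈ z.support, K.dim a = q + 1)
    (hbd : K.bdc z = xp q - xm q) (ih : ∀ {ym yp}, NuMem K ym yp → ∀ b, ym q b ≤ 1) (b : K.B) :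
    K.gch (xm q) z b ≤ 1 := by
  obtain ⟨w, hwz, hw_nonneg, hw_b⟩ :=
    hLF.exists_subchain_apply_eq_gch (hx.nonneg_m q) (hx.nonneg_p q) hz hbd b
  obtain ⟨ym, yp, hy, hyq⟩ := hx.exists_apply_eq_add_bdc (fun a ha => hz_dim a (hwz ha)) hw_nonneg
  have := ih hy b
  rwa [hyq, Finsupp.add_apply, hw_b] at this

theorem apply_zero_le_one (hU : K.Unital) {xm xp : ℕ → (K.B →₀ ℤ)} (hx : NuMem K xm xp)
    (b : K.B) : xm 0 b ≤ 1 := by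
  by_cases hb : b ∈ (xm 0).support
  · calc xm 0 b ≤ ∑ a ∈ (xm 0).support, xm 0 a :=
          Finset.single_le_sum (fun a _ => hx.nonneg_m 0 a) hb
      _ = K.epsc (xm 0) := by
          rw [epsc_apply]
          exact Finset.sum_congr rfl fun a ha => by rw [hU.eps_eq_one (hx.dim_m 0 a ha), mul_one]
      _ = 1 := hx.eps_m
  · rw [Finsupp.notMem_support_iff.1 hb]
    exact zero_le_one

theorem apply_le_one (hLF : K.LoopFree) (hU : K.Unital) :
    ∀ (q : ℕ) {xm xp : ℕ → (K.B →₀ ℤ)}, NuMem K xm xp → ∀ b, xm q b ≤ 1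
  | 0, _, _, hx => hx.apply_zero_le_one hU
  | q + 1, xm, xp, hx => fun a => by
    by_contra! h
    have ha : a ∈ (xm (q + 1)).support := Finsupp.mem_support_iff.2 (by omega)
    obtain ⟨b, hb⟩ := hU.exists_bd_neg (by rw [hx.dim_m _ a ha]; omega : 0 < K.dim a)
    have hle := hx.gch_le_one hLF (hx.nonneg_m _) (hx.dim_m _) (hx.bd_m q)
      (apply_le_one hLF hU q) b
    have hge := add_mul_bdm_single_le_gch (hx.nonneg_m _) (hx.bd_m q) ha b
    rw [bdm_single_apply, max_eq_left (by omega)] at hge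
    nlinarith [hx.nonneg_p q b]

end NuMem

/-- Theorem 4.1(2): if `K` is loop-free and unital and `x ∈ νK`, then each of
`x_q^-`, `x_q^+`, `g_q^-(x)` and `g_q^+(x)` is a sum of distinct basis elements,
i.e. has all coordinates in `{0, 1}`. -/
theorem stmt7 (K : FADC) (hLF : K.LoopFree) (hU : K.Unital)
    (xm xp : ℕ → (K.B →₀ ℤ)) (hx : NuMem K xm xp) (q : ℕ) :
    ∀ b : K.B,
      (xm q b = 0 ∨ xm q b = 1) ∧
      (xp q b = 0 ∨ xp q b = 1) ∧
      (K.gch (xm q) (xm (q + 1)) b = 0 ∨ K.gch (xm q) (xm (q + 1)) b = 1) ∧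
      (K.gch (xm q) (xp (q + 1)) b = 0 ∨ K.gch (xm q) (xp (q + 1)) b = 1) := by
  intro b
  have hgm := hx.gch_le_one hLF (hx.nonneg_m _) (hx.dim_m _) (hx.bd_m q)
    (NuMem.apply_le_one hLF hU q) b
  have hgp := hx.gch_le_one hLF (hx.nonneg_p _) (hx.dim_p _) (hx.bd_p q)
    (NuMem.apply_le_one hLF hU q) b
  have hxm_le_gm := FADC.apply_le_gch (hx.nonneg_m (q + 1)) (xm q) b
  have hxm_le_gp := FADC.apply_le_gch (hx.nonneg_p (q + 1)) (xm q) b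
  have hxp_le_gp := FADC.apply_le_gch_of_bdc_eq (hx.nonneg_p (q + 1)) (hx.bd_p q) b
  have := hx.nonneg_m q b
  have := hx.nonneg_p q b
  omega
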